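/- arXiv:2410.09231 — 5 statements merged into one kernel-verified Lean document; each statement's English description precedes it below -/
import Mathlib

section
/- For X ~ Binomial(n,p) and integer k with k/n ≤ p, the probability P(X ≤ k) ≤ exp(-n·D(k/n‖p)), where D(q1‖q2) = q1·log(q1/q2) + (1-q1)·log((1-q1)/(1-q2)) is the two-point KL divergence. -/
/-- Two-point (Bernoulli) Kullback–Leibler divergence. -/
noncomputable def klBer (a b : ℝ) : ℝ :=
  a * Real.log (a / b) + (1 - a) * Real.log ((1 - a) / (1 - b))

/-!
Exponential tilting: for `0 < r ≤ 1` every term `i ≤ k` of the lower tail grows when multiplied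
by `r ^ (i - k) ≥ 1`, and the tilted terms sum, over all `i ≤ n`, to `(p r + 1 - p) ^ n / r ^ k`
by the binomial theorem. The choice `r = a (1 - p) / ((1 - a) p)` with `a = k / n` minimises this
bound, and its value is exactly `exp (-n D(a ‖ p))`; `a ≤ p` is what makes `r ≤ 1`.
-/

open Finset Real

theorem sum_range_choose_mul_pow_le_add_pow_div_pow (n k : ℕ) {x y r : ℝ}
    (hx : 0 ≤ x) (hy : 0 ≤ y) (hr : 0 < r) (hr1 : r ≤ 1) :
    ∑ i ∈ range (k + 1), (n.choose i : ℝ) * x ^ i * y ^ (n - i) ≤ (x * r + y) ^ n / r ^ k := by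
  set f : ℕ → ℝ := fun i ↦ (n.choose i : ℝ) * (x * r) ^ i * y ^ (n - i)
  have hf : ∀ i, 0 ≤ f i := fun i ↦ by positivity
  have htilt : ∀ i ∈ range (k + 1), (n.choose i : ℝ) * x ^ i * y ^ (n - i) ≤ f i / r ^ k := by
    intro i hi
    have hrki : r ^ k ≤ r ^ i := pow_le_pow_of_le_one hr.le hr1 (mem_range_succ_iff.1 hi)
    calc (n.choose i : ℝ) * x ^ i * y ^ (n - i) = f i / r ^ i := by
          simp only [f, mul_pow]; field_simp
      _ ≤ f i / r ^ k := div_le_div_of_nonneg_left (hf i) (by positivity) hrki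
  have hsupp : ∀ i ∈ range (max k n + 1), i ∉ range (n + 1) → f i = 0 := fun i _ hi ↦ by
    simp [f, Nat.choose_eq_zero_of_lt (by simpa using hi : n < i)]
  calc ∑ i ∈ range (k + 1), (n.choose i : ℝ) * x ^ i * y ^ (n - i)
      ≤ ∑ i ∈ range (k + 1), f i / r ^ k := sum_le_sum htilt
    _ = (∑ i ∈ range (k + 1), f i) / r ^ k := (sum_div ..).symm
    _ ≤ (∑ i ∈ range (max k n + 1), f i) / r ^ k := by
        gcongr
        exact le_max_left k n
    _ = (∑ i ∈ range (n + 1), f i) / r ^ k := by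
        rw [sum_subset (range_subset_range.2 (by omega)) hsupp]
    _ = (x * r + y) ^ n / r ^ k := by
        rw [add_pow]
        refine congrArg (· / r ^ k) (sum_congr rfl fun i _ ↦ ?_)
        simp only [f]; ring

theorem exp_neg_mul_klBer_eq_add_pow_div_pow {a p : ℝ} (n k : ℕ)
    (ha : 0 < a) (ha1 : a < 1) (hp : 0 < p) (hp1 : p < 1) (hk : (k : ℝ) = n * a) :
    exp (-(n : ℝ) * klBer a p)
      = (p * (a * (1 - p) / ((1 - a) * p)) + (1 - p)) ^ n / (a * (1 - p) / ((1 - a) * p)) ^ k := by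
  have hb : 0 < 1 - a := by linarith
  have hq : 0 < 1 - p := by linarith
  have hbase : p * (a * (1 - p) / ((1 - a) * p)) + (1 - p) = (1 - p) / (1 - a) := by
    field_simp; ring
  rw [hbase, ← exp_log (by positivity : 0 < ((1 - p) / (1 - a)) ^ n / _),
    log_div (by positivity) (by positivity), log_pow, log_pow]
  congr 1
  rw [klBer, hk, log_div ha.ne' hp.ne', log_div hb.ne' hq.ne', log_div hq.ne' hb.ne',
    log_div (mul_pos ha hq).ne' (mul_pos hb hp).ne', log_mul ha.ne' hq.ne', log_mul hb.ne' hp.ne']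
  ring

theorem klBer_zero_left (b : ℝ) : klBer 0 b = -log (1 - b) := by
  simp [klBer, log_inv]

/-- Chernoff bound: for `X ~ Binomial(n,p)` and `k/n ≤ p`,
`P(X ≤ k) ≤ exp (-n · D(k/n ‖ p))`. -/
theorem binomial_lower_tail_chernoff (n k : ℕ) (p : ℝ)
    (hn : 0 < n) (hp : 0 < p) (hp1 : p < 1) (hk : (k : ℝ) / n ≤ p) :
    ∑ i ∈ Finset.range (k + 1), (n.choose i : ℝ) * p ^ i * (1 - p) ^ (n - i)
      ≤ Real.exp (-(n : ℝ) * klBer ((k : ℝ) / n) p) := by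
  rcases Nat.eq_zero_or_pos k with rfl | hk0
  · simp [klBer_zero_left, ← log_pow, exp_log (pow_pos (sub_pos.2 hp1) n)]
  set a : ℝ := (k : ℝ) / n
  have hn' : (0 : ℝ) < n := Nat.cast_pos.2 hn
  have ha : 0 < a := by positivity
  have ha1 : a < 1 := hk.trans_lt hp1
  have hka : (k : ℝ) = n * a := (mul_div_cancel₀ _ hn'.ne').symm
  have hr : 0 < a * (1 - p) / ((1 - a) * p) :=
    div_pos (mul_pos ha (sub_pos.2 hp1)) (mul_pos (sub_pos.2 ha1) hp)
  have hr1 : a * (1 - p) / ((1 - a) * p) ≤ 1 := by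
    rw [div_le_one (mul_pos (sub_pos.2 ha1) hp)]; linarith
  rw [exp_neg_mul_klBer_eq_add_pow_div_pow n k ha ha1 hp hp1 hka]
  exact sum_range_choose_mul_pow_le_add_pow_div_pow n k hp.le (by linarith) hr hr1
end

section
/- With Ğ(y,x) as defined (the annealed overlap exponent), for any fixed y ∈ (0,1/2), the limit of ∂Ğ/∂x as x → 0⁺ equals log(2)·((1-y)·(1-log(2-2y)) - h₂(y)/2), and this quantity is strictly positive for all y ∈ (0,1/2). -/
/-- Binary entropy (base 2). -/
noncomputable def binEnt (x : ℝ) : ℝ := -x * Real.logb 2 x - (1 - x) * Real.logb 2 (1 - x)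

/-- `y_{(x)} = y + (1-y)(2^{1-x} - 1)`. -/
noncomputable def yOf (y x : ℝ) : ℝ := y + (1 - y) * ((2 : ℝ) ^ (1 - x) - 1)

/-- The function `G(y, y', x)`. -/
noncomputable def Gfun (y y' x : ℝ) : ℝ :=
  x / 2 * klBer y (1 / 2) + y' * klBer (y / y') ((2 : ℝ) ^ (-(1 - x)))
    - klBer y (1 / 2) + 1 / 2 * klBer y' ((2 : ℝ) ^ (-x))

/-- `Ğ(y,x) = G(y, y_{(x)}, x)`. -/
noncomputable def Gbr (y x : ℝ) : ℝ := Gfun y (yOf y x) x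

/-! With `E = 2^{1-x}` and `u = y_{(x)}` one has `u - y = (1 - y)(E - 1)` and
`1 - u = (1 - y)(2 - E)`, so for `0 < x < 1` every logarithm in `Ğ(y, x)` splits into `log y`,
`log (1 - y)`, `log u` and `log E = (1 - x) log 2`. This gives a closed form `GbrClosed`, smooth
near `x = 0` because `u(0) = 1`, so `∂Ğ/∂x → GbrClosed'(0)`, which is computed directly.

For positivity put `s = 1 - y ∈ (1/2, 1)`: twice the limit is `2 log 2 · s (1 - log 2s) - H(s)`
(`H` the binary entropy in nats). It vanishes at `s = 1/2`, and its derivative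
`(1 - 2 log 2) log s - log (1 - s) - 2 log² 2` is positive on `(1/2, 1)` by the tangent bounds
`log 2s < 2s - 1` and `log 2(1 - s) ≤ 1 - 2s`, since `1 - 2 log 2 < 0`. -/

open Real Filter Topology Set

lemma klBer_half (y : ℝ) : klBer y (1 / 2) = log 2 - binEntropy y := by
  have hmul (a : ℝ) : a * log (2 * a) = a * log 2 + a * log a := by
    rcases eq_or_ne a 0 with rfl | ha
    · simp
    · rw [log_mul two_ne_zero ha]; ring
  have h1 : y / (1 / 2) = 2 * y := by ring
  have h2 : (1 - y) / (1 - 1 / 2) = 2 * (1 - y) := by ring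
  rw [klBer, h1, h2, hmul, hmul, binEntropy_eq_negMulLog_add_negMulLog_one_sub, negMulLog,
    negMulLog]
  ring

lemma binEnt_eq_binEntropy_div (x : ℝ) : binEnt x = binEntropy x / log 2 := by
  rw [binEnt, binEntropy_eq_negMulLog_add_negMulLog_one_sub, negMulLog, negMulLog, logb, logb]
  ring

lemma yOf_pos {y x : ℝ} (hy0 : 0 < y) (hy1 : y < 1) (hx : x < 1) : 0 < yOf y x := by
  have : 1 < (2 : ℝ) ^ (1 - x) := one_lt_rpow one_lt_two (by linarith)
  rw [yOf]
  nlinarith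

lemma yOf_zero (y : ℝ) : yOf y 0 = 1 := by
  norm_num [yOf]

lemma hasDerivAt_yOf (y x : ℝ) :
    HasDerivAt (yOf y) (-((1 - y) * (2 : ℝ) ^ (1 - x) * log 2)) x := by
  have h : HasDerivAt (fun x : ℝ => (2 : ℝ) ^ (1 - x)) ((2 : ℝ) ^ (1 - x) * log 2 * -1) x :=
    (hasStrictDerivAt_const_rpow two_pos (1 - x)).hasDerivAt.comp x
      ((hasDerivAt_id x).const_sub 1)
  exact (((h.sub_const 1).const_mul (1 - y)).const_add y).congr_deriv (by ring)

lemma yOf_mul_klBer {y x : ℝ} (hy0 : 0 < y) (hy1 : y < 1) (hx : x < 1) :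
    yOf y x * klBer (y / yOf y x) ((2 : ℝ) ^ (-(1 - x))) =
      y * log y + (yOf y x - y) * log (1 - y) + (1 - x) * log 2 * yOf y x
        - yOf y x * log (yOf y x) := by
  set E := (2 : ℝ) ^ (1 - x) with hE
  have hE1 : 1 < E := one_lt_rpow one_lt_two (by linarith)
  have hlogE : log E = (1 - x) * log 2 := by rw [hE, log_rpow two_pos]
  have hu := yOf_pos hy0 hy1 hx
  set u := yOf y x
  have hu' : u = y + (1 - y) * (E - 1) := rfl
  have h1y : 1 - y ≠ 0 := by linarith
  have hrpow : (2 : ℝ) ^ (-(1 - x)) = E⁻¹ := rpow_neg zero_le_two _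
  have l1 : log (y / u / E⁻¹) = log y + log E - log u := by
    rw [div_inv_eq_mul, div_mul_eq_mul_div, log_div (by positivity) hu.ne',
      log_mul hy0.ne' (by positivity)]
  have l2 : log ((1 - y / u) / (1 - E⁻¹)) = log (1 - y) + log E - log u := by
    have : (1 - y / u) / (1 - E⁻¹) = (1 - y) * E / u := by
      have : E - 1 ≠ 0 := by linarith
      field_simp
      rw [hu']; ring
    rw [this, log_div (by positivity) hu.ne', log_mul h1y (by positivity)]
  rw [klBer, hrpow, l1, l2, hlogE]
  field_simp
  ring

lemma klBer_yOf {y x : ℝ} (hu : yOf y x ≠ 0) (hx : 0 < x) :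
    klBer (yOf y x) ((2 : ℝ) ^ (-x)) =
      yOf y x * log (yOf y x) + x * log 2 * yOf y x + (1 - yOf y x) * log (2 * (1 - y)) := by
  set E := (2 : ℝ) ^ (1 - x) with hE
  have hE0 : 0 < E := by positivity
  have hE2 : E < 2 := by
    simpa using rpow_lt_rpow_of_exponent_lt one_lt_two (by linarith : 1 - x < 1)
  have hlogE : log E = (1 - x) * log 2 := by rw [hE, log_rpow two_pos]
  set u := yOf y x
  have hu' : u = y + (1 - y) * (E - 1) := rfl
  have hrpow : (2 : ℝ) ^ (-x) = E / 2 := by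
    rw [hE, rpow_sub two_pos, rpow_one, rpow_neg two_pos.le]
    ring
  have l1 : log (u / (E / 2)) = log 2 + log u - log E := by
    rw [div_div_eq_mul_div, log_div (by positivity) hE0.ne', mul_comm, log_mul two_ne_zero hu]
  have l2 : (1 - u) / (1 - E / 2) = 2 * (1 - y) := by
    have : 2 - E ≠ 0 := by linarith
    field_simp
    rw [hu']; ring
  rw [klBer, hrpow, l1, l2, hlogE]
  ring

noncomputable def GbrClosed (y x : ℝ) : ℝ :=
  (x / 2 - 1) * klBer y (1 / 2) + y * log y + (yOf y x - y) * log (1 - y)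
    + (1 - x / 2) * log 2 * yOf y x - yOf y x * log (yOf y x) / 2
    + (1 - yOf y x) * log (2 * (1 - y)) / 2

lemma eqOn_Gbr_GbrClosed {y : ℝ} (hy0 : 0 < y) (hy1 : y < 1) :
    EqOn (Gbr y) (GbrClosed y) (Ioo 0 1) := by
  intro x ⟨hx0, hx1⟩
  rw [Gbr, Gfun, yOf_mul_klBer hy0 hy1 hx1, klBer_yOf (yOf_pos hy0 hy1 hx1).ne' hx0,
    GbrClosed]
  ring

lemma contDiffAt_GbrClosed_zero (y : ℝ) : ContDiffAt ℝ 1 (GbrClosed y) 0 := by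
  have hyOf : ContDiff ℝ 1 (yOf y) := by
    unfold yOf
    fun_prop (disch := norm_num)
  have hlog : ContDiffAt ℝ 1 (fun x => log (yOf y x)) 0 :=
    hyOf.contDiffAt.log (by rw [yOf_zero]; norm_num)
  unfold GbrClosed
  fun_prop

lemma hasDerivAt_GbrClosed_zero {y : ℝ} (hy1 : y < 1) :
    HasDerivAt (GbrClosed y)
      (log 2 * ((1 - y) * (1 - log (2 - 2 * y)) - binEnt y / 2)) 0 := by
  have hu := hasDerivAt_yOf y 0
  have hulog : HasDerivAt (fun x => yOf y x * log (yOf y x))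
      ((log (yOf y 0) + 1) * -((1 - y) * (2 : ℝ) ^ ((1 : ℝ) - 0) * log 2)) 0 :=
    (hasDerivAt_mul_log (by rw [yOf_zero]; norm_num)).comp 0 hu
  have hx : HasDerivAt (fun x : ℝ => x) 1 0 := hasDerivAt_id 0
  have h := ((((((hx.div_const 2).sub_const 1).mul_const (klBer y (1 / 2))).add_const
    (y * log y)).add ((hu.sub_const y).mul_const (log (1 - y)))).add
    ((((hx.div_const 2).const_sub 1).mul_const (log 2)).mul hu)).sub (hulog.div_const 2)
    |>.add (((hu.const_sub 1).mul_const (log (2 * (1 - y)))).div_const 2)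
  refine h.congr_deriv ?_
  have h2y : log (2 - 2 * y) = log 2 + log (1 - y) := by
    rw [← log_mul two_ne_zero (by linarith)]; ring_nf
  rw [yOf_zero, h2y, log_mul two_ne_zero (by linarith), klBer_half, binEnt_eq_binEntropy_div]
  field_simp
  norm_num
  ring

lemma tendsto_deriv_nhdsGT_of_eqOn {f g : ℝ → ℝ} {a b : ℝ} (hab : a < b)
    (hfg : EqOn f g (Ioo a b)) (hg : ContinuousAt (deriv g) a) :
    Tendsto (deriv f) (𝓝[>] a) (𝓝 (deriv g a)) := by
  refine (hg.tendsto.mono_left nhdsWithin_le_nhds).congr' ?_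
  filter_upwards [Ioo_mem_nhdsGT hab] with x hx
  refine Filter.EventuallyEq.deriv_eq ?_ |>.symm
  filter_upwards [isOpen_Ioo.mem_nhds hx] with z hz
  exact hfg hz

lemma two_mul_sq_log_two_lt {t : ℝ} (ht : 1 / 2 < t) (ht1 : t < 1) :
    2 * log 2 ^ 2 < (1 - 2 * log 2) * log t - log (1 - t) := by
  have hL := log_two_gt_d9
  have hL1 := log_two_lt_d9
  have hlog_t : log t < 2 * t - 1 - log 2 := by
    have := log_lt_sub_one_of_pos (by linarith : 0 < 2 * t) (by linarith)
    rw [log_mul two_ne_zero (by linarith)] at this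
    linarith
  have hlog_one_sub : log (1 - t) ≤ 1 - 2 * t - log 2 := by
    have := log_le_sub_one_of_pos (by linarith : 0 < 2 * (1 - t))
    rw [log_mul two_ne_zero (by linarith)] at this
    linarith
  nlinarith [mul_lt_mul_of_neg_left hlog_t (by linarith : 1 - 2 * log 2 < 0)]

lemma binEntropy_lt_of_half_lt {s : ℝ} (hs : 1 / 2 < s) (hs1 : s ≤ 1) :
    binEntropy s < 2 * log 2 * s * (1 - log (2 * s)) := by
  let φ : ℝ → ℝ := fun s => 2 * log 2 * s * (1 - log (2 * s)) - binEntropy s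
  have hφ_half : φ (1 / 2) = 0 := by
    simp only [φ, one_div, mul_inv_cancel₀ (two_ne_zero' ℝ), log_one, binEntropy_two_inv]
    ring
  have hφ_cont : ContinuousOn φ (Icc (1 / 2) 1) := by
    have : ContinuousOn (fun s : ℝ => log (2 * s)) (Icc (1 / 2) 1) :=
      ContinuousOn.log (by fun_prop) fun s hs => by linarith [hs.1]
    fun_prop
  have hφ_deriv : ∀ t ∈ Ioo (1 / 2 : ℝ) 1,
      HasDerivAt φ ((1 - 2 * log 2) * log t - log (1 - t) - 2 * log 2 ^ 2) t := by
    intro t ⟨ht, ht1⟩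
    have h2t : HasDerivAt (fun s : ℝ => log (2 * s)) (2 / (2 * t)) t :=
      ((hasDerivAt_id' t).const_mul 2).log (by linarith) |>.congr_deriv (by simp)
    have h := (((hasDerivAt_id' t).const_mul (2 * log 2)).mul (h2t.const_sub 1)).sub
      (hasDerivAt_binEntropy (by linarith) (by linarith))
    refine h.congr_deriv ?_
    rw [log_mul two_ne_zero (by linarith)]
    field_simp
    ring
  have hmono : StrictMonoOn φ (Icc (1 / 2) 1) := by
    refine strictMonoOn_of_deriv_pos (convex_Icc _ _) hφ_cont fun t ht => ?_
    rw [interior_Icc] at ht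
    rw [(hφ_deriv t ht).deriv]
    linarith [two_mul_sq_log_two_lt ht.1 ht.2]
  have := hmono ⟨le_rfl, by norm_num⟩ ⟨hs.le, hs1⟩ hs
  simp only [hφ_half, φ] at this
  linarith

/-- The limit of `∂Ğ/∂x` as `x → 0⁺` equals
`log 2 ((1-y)(1 - log(2-2y)) - h₂(y)/2)`, which is strictly positive for `y ∈ (0,1/2)`. -/
theorem Gbr_deriv_limit_at_zero (y : ℝ) (hy0 : 0 < y) (hy : y < 1 / 2) :
    Filter.Tendsto (fun x => deriv (Gbr y) x) (nhdsWithin 0 (Set.Ioi 0))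
      (nhds (Real.log 2 * ((1 - y) * (1 - Real.log (2 - 2 * y)) - binEnt y / 2))) ∧
    0 < Real.log 2 * ((1 - y) * (1 - Real.log (2 - 2 * y)) - binEnt y / 2) := by
  have hy1 : y < 1 := by linarith
  have hderiv_cont : ContinuousAt (deriv (GbrClosed y)) 0 :=
    ((contDiffAt_GbrClosed_zero y).derivWithin (m := 0) le_rfl).continuousAt
  have hlim := tendsto_deriv_nhdsGT_of_eqOn one_pos (eqOn_Gbr_GbrClosed hy0 hy1) hderiv_cont
  rw [(hasDerivAt_GbrClosed_zero hy1).deriv] at hlim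
  refine ⟨hlim, ?_⟩
  have hentropy := binEntropy_lt_of_half_lt (s := 1 - y) (by linarith) (by linarith)
  rw [binEntropy_one_sub] at hentropy
  have hL : log 2 ≠ 0 := (log_pos one_lt_two).ne'
  have hrewrite : log 2 * ((1 - y) * (1 - log (2 - 2 * y)) - binEnt y / 2) =
      (2 * log 2 * (1 - y) * (1 - log (2 * (1 - y))) - binEntropy y) / 2 := by
    rw [binEnt_eq_binEntropy_div, mul_one_sub 2 y]
    field_simp
  rw [hrewrite]
  linarith
end

section
/- With Ğ(y,x) as defined, if y ∈ (0,1/2) then Ğ(y,x) > 0 for all x ∈ (0,1). Moreover if x and y are restricted to compact subsets of (0,1) and (0,1/2) respectively, then Ğ(y,x) is bounded below by a positive constant. -/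
open Real Set

noncomputable def negMulLogDiff (b u : ℝ) : ℝ := negMulLog (exp u + b) - negMulLog (exp u)

lemma negMulLogDiff_log (b : ℝ) {w : ℝ} (hw : 0 < w) :
    negMulLogDiff b (log w) = negMulLog (w + b) - negMulLog w := by
  rw [negMulLogDiff, exp_log hw]

section negMulLogDiff

variable {b u : ℝ}

lemma hasDerivAt_negMulLogDiff (hu : 0 < exp u + b) :
    HasDerivAt (negMulLogDiff b) (exp u * (u - log (exp u + b))) u := by
  have hs := ((hasDerivAt_negMulLog hu.ne').comp u ((hasDerivAt_exp u).add_const b)).sub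
    ((hasDerivAt_negMulLog (exp_pos u).ne').comp u (hasDerivAt_exp u))
  refine hs.congr_deriv ?_
  rw [log_exp]
  ring

lemma hasDerivAt_exp_mul_sub_log (hu : 0 < exp u + b) :
    HasDerivAt (fun u => exp u * (u - log (exp u + b)))
      (exp u * (u - log (exp u + b) + 1 - exp u / (exp u + b))) u := by
  have hs := (hasDerivAt_exp u).add_const b
  refine ((hasDerivAt_exp u).mul ((hasDerivAt_id' u).sub (hs.log hu.ne'))).congr_deriv ?_
  simp only [Pi.sub_apply]
  field_simp
  ring

/-- The second derivative is `eᵘ (log z + 1 - z)` with `z = eᵘ / (eᵘ + b) > 1`, and `log z < z - 1`. -/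
lemma strictConcaveOn_negMulLogDiff (hb : b < 0) :
    StrictConcaveOn ℝ (Ioi (log (-b))) (negMulLogDiff b) := by
  have pos : ∀ u ∈ Ioi (log (-b)), 0 < exp u + b := fun u hu => by
    have := exp_lt_exp.2 (mem_Ioi.1 hu)
    rw [exp_log (neg_pos.2 hb)] at this
    linarith
  have anti : StrictAntiOn (fun u => exp u * (u - log (exp u + b))) (Ioi (log (-b))) := by
    refine strictAntiOn_of_deriv_neg (convex_Ioi _)
      (fun u hu => (hasDerivAt_exp_mul_sub_log (pos u hu)).continuousAt.continuousWithinAt)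
      fun u hu => ?_
    rw [interior_Ioi] at hu
    have hs := pos u hu
    rw [(hasDerivAt_exp_mul_sub_log hs).deriv]
    have hz : log (exp u / (exp u + b)) < exp u / (exp u + b) - 1 :=
      log_lt_sub_one_of_pos (by positivity) (by rw [Ne, div_eq_one_iff_eq hs.ne']; linarith)
    rw [log_div (exp_pos u).ne' hs.ne', log_exp] at hz
    exact mul_neg_of_pos_of_neg (exp_pos u) (by linarith)
  refine StrictAntiOn.strictConcaveOn_of_deriv (convex_Ioi _)
    (fun u hu => (hasDerivAt_negMulLogDiff (pos u hu)).continuousAt.continuousWithinAt) ?_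
  rw [interior_Ioi]
  exact anti.congr fun u hu => (hasDerivAt_negMulLogDiff (pos u hu)).deriv.symm

end negMulLogDiff

theorem two_mul_Gbr_eq {y x : ℝ} (hy0 : 0 < y) (hy1 : y < 1) (hx : x ∈ Ioo 0 1) :
    2 * Gbr y x = negMulLog (yOf y x) - negMulLog ((1 - y) * 2 ^ (1 - x))
      + (1 - x) * negMulLog (2 * (1 - y)) - x * (negMulLog y - negMulLog (1 - y)) := by
  obtain ⟨hx0, hx1⟩ := hx
  have ha : 0 < 1 - y := by linarith
  have hinv : (2 : ℝ) ^ (-(1 - x)) = (2 ^ (1 - x))⁻¹ := rpow_neg zero_le_two _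
  have hhalf : (2 : ℝ) ^ (-x) = 2 ^ (1 - x) / 2 := by
    rw [show -x = (1 - x) - 1 by ring, rpow_sub two_pos, rpow_one]
  unfold Gbr Gfun klBer yOf
  rw [hinv, hhalf]
  set t : ℝ := 2 ^ (1 - x) with ht
  have ht1 : 1 < t := one_lt_rpow one_lt_two (by linarith)
  have ht2 : t < 2 := by
    simpa using rpow_lt_rpow_of_exponent_lt one_lt_two (by linarith : 1 - x < 1)
  have ht0 : 0 < t := by linarith
  have hx : x = 1 - log t / log 2 := by
    rw [ht, log_rpow two_pos]; field_simp; ring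
  set s := y + (1 - y) * (t - 1)
  have hs : 0 < s := by nlinarith
  have e1 : y / s / t⁻¹ = y * t / s := by field_simp
  have e2 : (1 - y / s) / (1 - t⁻¹) = (1 - y) * t / s := by
    rw [div_eq_div_iff (sub_pos.2 (inv_lt_one_of_one_lt₀ ht1)).ne' hs.ne']
    field_simp
    ring
  have e3 : (1 - s) / (1 - t / 2) = 2 * (1 - y) := by
    rw [div_eq_iff (by linarith)]; ring
  have e4 : s / (t / 2) = 2 * s / t := by field_simp
  have e5 : y / (1 / 2) = 2 * y := by ring
  have e6 : (1 - y) / (1 - 1 / 2) = 2 * (1 - y) := by ring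
  rw [e1, e2, e3, e4, e5, e6]
  simp only [negMulLog, log_mul two_ne_zero hy0.ne', log_mul two_ne_zero ha.ne',
    log_mul ha.ne' ht0.ne', log_div (mul_pos hy0 ht0).ne' hs.ne', log_mul hy0.ne' ht0.ne',
    log_div (mul_pos ha ht0).ne' hs.ne', log_div (mul_pos two_pos hs).ne' ht0.ne',
    log_mul two_ne_zero hs.ne']
  rw [hx]
  field_simp
  ring

theorem two_mul_Gbr_eq_negMulLogDiff {y x : ℝ} (hy0 : 0 < y) (hy1 : y < 1) (hx : x ∈ Ioo 0 1) :
    2 * Gbr y x = negMulLogDiff (2 * y - 1) ((1 - x) * log (2 * (1 - y)) + x * log (1 - y)) -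
      ((1 - x) * negMulLogDiff (2 * y - 1) (log (2 * (1 - y)))
        + x * negMulLogDiff (2 * y - 1) (log (1 - y))) := by
  have ha : 0 < 1 - y := by linarith
  have ht : (0 : ℝ) < 2 ^ (1 - x) := by positivity
  have harg : (1 - x) * log (2 * (1 - y)) + x * log (1 - y) = log ((1 - y) * 2 ^ (1 - x)) := by
    rw [log_mul two_ne_zero ha.ne', log_mul ha.ne' ht.ne', log_rpow two_pos]; ring
  rw [two_mul_Gbr_eq hy0 hy1 hx, harg, negMulLogDiff_log _ (by positivity),
    negMulLogDiff_log _ (by positivity), negMulLogDiff_log _ ha, yOf,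
    show 2 * (1 - y) + (2 * y - 1) = 1 by ring, show 1 - y + (2 * y - 1) = y by ring,
    show (1 - y) * 2 ^ (1 - x) + (2 * y - 1) = y + (1 - y) * (2 ^ (1 - x) - 1) by ring,
    negMulLog_one]
  ring

theorem Gbr_pos {y x : ℝ} (hy0 : 0 < y) (hy : y < 1 / 2) (hx : x ∈ Ioo 0 1) : 0 < Gbr y x := by
  have ha : 0 < 1 - y := by linarith
  have mem : ∀ w, 1 - y ≤ w → log w ∈ Ioi (log (-(2 * y - 1))) := fun w hw =>
    log_lt_log (by linarith) (by linarith)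
  have hne : log (2 * (1 - y)) ≠ log (1 - y) := by
    rw [log_mul two_ne_zero ha.ne']
    linarith [log_pos one_lt_two]
  have jensen := (strictConcaveOn_negMulLogDiff (by linarith : 2 * y - 1 < 0)).2
    (mem _ (by linarith)) (mem _ le_rfl) hne (sub_pos.2 hx.2) hx.1 (by ring)
  simp only [smul_eq_mul] at jensen
  linarith [two_mul_Gbr_eq_negMulLogDiff hy0 (by linarith) hx]

theorem continuousOn_Gbr : ContinuousOn (fun p : ℝ × ℝ => Gbr p.1 p.2) (Ioo 0 1 ×ˢ Ioo 0 1) := by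
  have hc : Continuous fun p : ℝ × ℝ => (negMulLog (yOf p.1 p.2)
      - negMulLog ((1 - p.1) * 2 ^ (1 - p.2)) + (1 - p.2) * negMulLog (2 * (1 - p.1))
      - p.2 * (negMulLog p.1 - negMulLog (1 - p.1))) / 2 := by
    unfold yOf; fun_prop (disch := norm_num)
  refine hc.continuousOn.congr fun p hp => ?_
  beta_reduce
  rw [← two_mul_Gbr_eq hp.1.1 hp.1.2 hp.2]
  ring

/-- For `y ∈ (0,1/2)`, `Ğ(y,x) > 0` on `(0,1)`; moreover on compact subsets of
`(0,1) × (0,1/2)` it is bounded below by a positive constant. -/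
theorem Gbr_positive (y : ℝ) (hy0 : 0 < y) (hy : y < 1 / 2) :
    (∀ x ∈ Set.Ioo (0 : ℝ) 1, 0 < Gbr y x) ∧
      ∀ Kx Ky : Set ℝ, IsCompact Kx → Kx ⊆ Set.Ioo (0 : ℝ) 1 →
        IsCompact Ky → Ky ⊆ Set.Ioo (0 : ℝ) (1 / 2) →
          ∃ c : ℝ, 0 < c ∧ ∀ y' ∈ Ky, ∀ x ∈ Kx, c ≤ Gbr y' x := by
  refine ⟨fun x hx => Gbr_pos hy0 hy hx, fun Kx Ky hKx hKxs hKy hKys => ?_⟩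
  have hK : Ky ×ˢ Kx ⊆ Ioo 0 1 ×ˢ Ioo 0 1 :=
    prod_mono (hKys.trans (Ioo_subset_Ioo_right (by norm_num))) hKxs
  obtain ⟨c, hc, hle⟩ := (hKy.prod hKx).exists_forall_le' (continuousOn_Gbr.mono hK)
    fun p hp => Gbr_pos (hKys hp.1).1 (hKys hp.1).2 (hKxs hp.2)
  exact ⟨c, hc, fun y' hy' x hx => hle (y', x) ⟨hy', hx⟩⟩
end

section
/- With G as defined and y ∈ (0,1/2), for every fixed x ∈ (0,1) the derivative bound |∂G/∂y'|_{y'=y_{(x)}}| ≤ (1/2)·log(2(1-y)) + x·log(4)/(2^{2-x} - 2) holds. -/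
/-!
At `p = y_{(x)}` the derivative equals `½ log((1 - y) 2^{1-x} / p)`. With `t = 2^{1-x} - 1 ∈ (0, 1)`
we have `p = y + (1 - y) t`, so `t ≤ p ≤ (1 - y)(1 + t)` when `y ≤ 1/2`: the derivative is
nonnegative and at most `½ log(2(1 - y)) + ½ log((1 + t) / (2t))`. What remains is
`-t log t ≤ (t + 2) log(2 / (1 + t))`, which follows from `(t - t⁻¹)/2 = sinh(log t) ≤ log t` for
`t ≤ 1` together with `log(2 / (1 + t)) ≥ (1 - t)/2`.
-/

open Real

lemma sub_inv_div_two_le_log {t : ℝ} (ht0 : 0 < t) (ht1 : t ≤ 1) : (t - t⁻¹) / 2 ≤ log t := by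
  rw [← sinh_log ht0]
  exact sinh_le_self_iff.2 (log_nonpos ht0.le ht1)

lemma neg_mul_log_le_mul_log_two_div {t : ℝ} (ht0 : 0 < t) (ht1 : t ≤ 1) :
    -(t * log t) ≤ (t + 2) * log (2 / (1 + t)) := by
  have hlog : (1 - t) / 2 ≤ log (2 / (1 + t)) := by
    have := one_sub_inv_le_log_of_pos (show 0 < 2 / (1 + t) by positivity)
    rwa [inv_div, show 1 - (1 + t) / 2 = (1 - t) / 2 by ring] at this
  have hent : -(t * log t) ≤ (1 - t ^ 2) / 2 := by
    have := mul_le_mul_of_nonneg_left (sub_inv_div_two_le_log ht0 ht1) ht0.le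
    rw [mul_div_assoc', mul_sub, mul_inv_cancel₀ ht0.ne'] at this
    linarith
  calc -(t * log t) ≤ (1 - t ^ 2) / 2 := hent
    _ ≤ (t + 2) * ((1 - t) / 2) := by nlinarith
    _ ≤ (t + 2) * log (2 / (1 + t)) := by gcongr

lemma hasDerivAt_klBer {a b : ℝ} (ha0 : a ≠ 0) (ha1 : a ≠ 1) (hb0 : b ≠ 0) (hb1 : b ≠ 1) :
    HasDerivAt (fun a => klBer a b) (log (a / b) - log ((1 - a) / (1 - b))) a := by
  have ha1' : 1 - a ≠ 0 := sub_ne_zero.2 (Ne.symm ha1)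
  have hb1' : 1 - b ≠ 0 := sub_ne_zero.2 (Ne.symm hb1)
  have hlin : HasDerivAt (fun a : ℝ => 1 - a) (-1) a := by
    simpa using (hasDerivAt_id a).const_sub 1
  have h1 := (hasDerivAt_id' a).mul ((hasDerivAt_id' a).div_const b |>.log (div_ne_zero ha0 hb0))
  have h2 := hlin.mul ((hlin.div_const (1 - b)).log (div_ne_zero ha1' hb1'))
  refine (h1.add h2).congr_deriv ?_
  field_simp
  ring

lemma hasDerivAt_mul_klBer_div {y t b : ℝ} (hy : y ≠ 0) (ht : t ≠ 0) (hyt : y ≠ t)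
    (hb0 : b ≠ 0) (hb1 : b ≠ 1) :
    HasDerivAt (fun s => s * klBer (y / s) b) (log ((1 - y / t) / (1 - b))) t := by
  have hdiv : HasDerivAt (fun s => y / s) (-(y / t ^ 2)) t := by
    simpa [div_eq_mul_inv] using (hasDerivAt_inv ht).const_mul y
  have hk := (hasDerivAt_klBer (div_ne_zero hy ht) (by rwa [Ne, div_eq_one_iff_eq ht])
    hb0 hb1).comp t hdiv
  refine ((hasDerivAt_id' t).mul hk).congr_deriv ?_
  simp only [Function.comp, klBer]
  field_simp
  ring

lemma two_rpow_one_sub_mem_Ioo {x : ℝ} (hx : x ∈ Set.Ioo 0 1) :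
    (2 : ℝ) ^ (1 - x) ∈ Set.Ioo 1 2 := by
  obtain ⟨hx0, hx1⟩ := hx
  refine ⟨one_lt_rpow one_lt_two (by linarith), ?_⟩
  simpa using rpow_lt_rpow_of_exponent_lt one_lt_two (by linarith : 1 - x < 1)

lemma hasDerivAt_Gfun_yOf {y x : ℝ} (hy0 : 0 < y) (hy1 : y < 1) (hx : x ∈ Set.Ioo 0 1) :
    HasDerivAt (fun t => Gfun y t x) (log ((1 - y) * 2 ^ (1 - x) / yOf y x) / 2) (yOf y x) := by
  set q : ℝ := 2 ^ (1 - x)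
  obtain ⟨hq1, hq2⟩ : q ∈ Set.Ioo 1 2 := two_rpow_one_sub_mem_Ioo hx
  have hb : (2 : ℝ) ^ (-(1 - x)) = q⁻¹ := rpow_neg zero_le_two _
  have hc : (2 : ℝ) ^ (-x) = q / 2 := by
    rw [show -x = (1 - x) - 1 by ring, rpow_sub two_pos, rpow_one]
  set p := yOf y x
  have hp' : p = y + (1 - y) * (q - 1) := rfl
  have hyp : y < p := by nlinarith
  have hp1 : p < 1 := by nlinarith
  have hd1 := hasDerivAt_mul_klBer_div (b := 2 ^ (-(1 - x))) hy0.ne' (hy0.trans hyp).ne' hyp.ne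
    (by rw [hb]; positivity) (by rw [hb]; exact (inv_lt_one_of_one_lt₀ hq1).ne)
  have hd2 := hasDerivAt_klBer (b := 2 ^ (-x)) (hy0.trans hyp).ne' hp1.ne
    (by rw [hc]; positivity) (by rw [hc]; linarith)
  refine ((((hasDerivAt_const p _).add hd1).sub (hasDerivAt_const p _)).add
    (hd2.const_mul (1 / 2))).congr_deriv ?_
  have hp0 : 0 < p := hy0.trans hyp
  have hp1' : 1 - p ≠ 0 := by linarith
  have hy1' : 1 - y ≠ 0 := by linarith
  have hr1 : (1 - y / p) / (1 - q⁻¹) = (1 - y) * q / p := by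
    field_simp
    linear_combination hp'
  have hr2 : p / (q / 2) / ((1 - p) / (1 - q / 2)) = ((1 - y) * q / p)⁻¹ := by
    field_simp
    linear_combination hp'
  rw [hb, hc, hr1, ← log_div, hr2, log_inv]
  · ring
  · exact div_ne_zero hp0.ne' (by positivity)
  · exact div_ne_zero hp1' (by linarith)

lemma abs_log_div_two_le {y t : ℝ} (hy0 : 0 ≤ y) (hy : y ≤ 1 / 2) (ht0 : 0 < t) (ht1 : t ≤ 1) :
    |log ((1 - y) * (1 + t) / (y + (1 - y) * t)) / 2|
      ≤ 1 / 2 * log (2 * (1 - y)) + log (2 / (1 + t)) / t := by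
  set p := y + (1 - y) * t
  have hy1 : 0 < 1 - y := by linarith
  have htp : t ≤ p := by nlinarith
  have hp0 : 0 < p := ht0.trans_le htp
  have hpq : p ≤ (1 - y) * (1 + t) := by nlinarith
  have hnonneg : 0 ≤ log ((1 - y) * (1 + t) / p) :=
    log_nonneg ((one_le_div hp0).2 hpq)
  have hmono : log ((1 - y) * (1 + t) / p) ≤ log ((1 - y) * (1 + t) / t) :=
    log_le_log (by positivity) (div_le_div_of_nonneg_left (by positivity) ht0 htp)
  have hsplit : log ((1 - y) * (1 + t) / t) = log (2 * (1 - y)) + log ((1 + t) / (2 * t)) := by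
    rw [← log_mul (by positivity) (by positivity)]
    congr 1
    field_simp
  have hkey : log ((1 + t) / (2 * t)) / 2 ≤ log (2 / (1 + t)) / t := by
    have hlog : log ((1 + t) / (2 * t)) = -log (2 / (1 + t)) - log t := by
      rw [← div_div, log_div (by positivity) ht0.ne', ← log_inv, inv_div]
    rw [div_le_div_iff₀ two_pos ht0, hlog]
    linarith [neg_mul_log_le_mul_log_two_div ht0 ht1]
  rw [abs_of_nonneg (by positivity)]
  linarith

/-- For every fixed `x ∈ (0,1)` and `y ∈ (0,1/2)`:
`|∂G/∂y'|_{y'=y_{(x)}}| ≤ (1/2) log(2(1-y)) + x log 4 / (2^{2-x} - 2)`. -/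
theorem Gfun_deriv_y'_pointwise_bound (y x : ℝ) (hy0 : 0 < y) (hy : y < 1 / 2)
    (hx : x ∈ Set.Ioo (0 : ℝ) 1) :
    |deriv (fun t => Gfun y t x) (yOf y x)|
      ≤ 1 / 2 * Real.log (2 * (1 - y)) + x * Real.log 4 / ((2 : ℝ) ^ (2 - x) - 2) := by
  obtain ⟨hq1, hq2⟩ := two_rpow_one_sub_mem_Ioo hx
  set t : ℝ := 2 ^ (1 - x) - 1
  have hq : (2 : ℝ) ^ (1 - x) = 1 + t := by ring
  have ht0 : 0 < t := by linarith
  have hrhs : x * log 4 / ((2 : ℝ) ^ (2 - x) - 2) = log (2 / (1 + t)) / t := by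
    have h4 : log 4 = 2 * log 2 := by
      rw [show (4 : ℝ) = 2 ^ 2 by norm_num, log_pow, Nat.cast_ofNat]
    have hlog : log (1 + t) = (1 - x) * log 2 := by rw [← hq, log_rpow two_pos]
    rw [show 2 - x = 1 + (1 - x) by ring, rpow_add two_pos, rpow_one, hq,
      log_div two_ne_zero (by positivity), hlog, h4]
    field_simp [ht0.ne']
    ring
  rw [(hasDerivAt_Gfun_yOf hy0 (by linarith) hx).deriv, hrhs, hq]
  exact abs_log_div_two_le hy0.le hy.le ht0 (by linarith)
end

section
/- For p ∈ (0,1) and x with |x| sufficiently small (specifically |x| ≤ 2p(1-p) and p + x ∈ (0,1)), the two-point KL divergence satisfies D(p + x ‖ p) ≥ x²/(6·p·(1-p)). -/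
private lemma hasDeriv_f1 {s : ℝ} (hs : 0 < s) :
    HasDerivAt (fun s : ℝ => Real.log s + 2 * s⁻¹ - (1/2) * (s^2)⁻¹)
      (s⁻¹ + 2 * (-(s^2)⁻¹) - (1/2) * (-(2*s) / (s^2)^2)) s := by
  have h1 := Real.hasDerivAt_log hs.ne'
  have h2 := (hasDerivAt_inv hs.ne').const_mul (2:ℝ)
  have h3 : HasDerivAt (fun s : ℝ => s^2) (2*s) s := by
    simpa using (hasDerivAt_pow 2 s)
  have h4 := (h3.inv (by positivity)).const_mul ((1:ℝ)/2)
  exact (h1.add h2).sub h4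

private lemma aux1 {t : ℝ} (ht : 1 ≤ t) :
    3/2 - 2 * t⁻¹ + (1/2) * (t^2)⁻¹ ≤ Real.log t := by
  have key : MonotoneOn (fun s : ℝ => Real.log s + 2 * s⁻¹ - (1/2) * (s^2)⁻¹)
      (Set.Ici 1) := by
    apply monotoneOn_of_deriv_nonneg (convex_Ici 1)
    · intro s hs
      have hs0 : (0:ℝ) < s := lt_of_lt_of_le one_pos hs
      exact (hasDeriv_f1 hs0).continuousAt.continuousWithinAt
    · intro s hs
      rw [interior_Ici] at hs
      have hs0 : (0:ℝ) < s := lt_trans one_pos hs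
      exact (hasDeriv_f1 hs0).differentiableAt.differentiableWithinAt
    · intro s hs
      rw [interior_Ici] at hs
      have hs0 : (0:ℝ) < s := lt_trans one_pos hs
      rw [(hasDeriv_f1 hs0).deriv]
      have h : s⁻¹ + 2 * (-(s^2)⁻¹) - (1/2) * (-(2*s) / (s^2)^2)
          = (s-1)^2 / s^3 := by field_simp; ring
      rw [h]; positivity
  have h1 := key (Set.self_mem_Ici) (Set.mem_Ici.mpr ht) ht
  simp only [Real.log_one, one_pow, inv_one] at h1
  linarith

private lemma hasDeriv_f2 {s : ℝ} (hs : 0 < s) :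
    HasDerivAt (fun s : ℝ => s/2 - (1/2) * s⁻¹ - Real.log s)
      ((1:ℝ)/2 - (1/2) * (-(s^2)⁻¹) - s⁻¹) s := by
  have h1 : HasDerivAt (fun s : ℝ => s/2) ((1:ℝ)/2) s := by
    simpa using (hasDerivAt_id s).div_const 2
  have h2 := (hasDerivAt_inv hs.ne').const_mul ((1:ℝ)/2)
  exact (h1.sub h2).sub (Real.hasDerivAt_log hs.ne')

private lemma aux2 {u : ℝ} (hu : 1 ≤ u) :
    Real.log u ≤ u/2 - (1/2) * u⁻¹ := by
  have key : MonotoneOn (fun s : ℝ => s/2 - (1/2) * s⁻¹ - Real.log s)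
      (Set.Ici 1) := by
    apply monotoneOn_of_deriv_nonneg (convex_Ici 1)
    · intro s hs
      have hs0 : (0:ℝ) < s := lt_of_lt_of_le one_pos hs
      exact (hasDeriv_f2 hs0).continuousAt.continuousWithinAt
    · intro s hs
      rw [interior_Ici] at hs
      have hs0 : (0:ℝ) < s := lt_trans one_pos hs
      exact (hasDeriv_f2 hs0).differentiableAt.differentiableWithinAt
    · intro s hs
      rw [interior_Ici] at hs
      have hs0 : (0:ℝ) < s := lt_trans one_pos hs
      rw [(hasDeriv_f2 hs0).deriv]
      have h : (1:ℝ)/2 - (1/2) * (-(s^2)⁻¹) - s⁻¹ = (s-1)^2 / (2*s^2) := by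
        field_simp; ring
      rw [h]; positivity
  have h1 := key (Set.self_mem_Ici) (Set.mem_Ici.mpr hu) hu
  simp only [Real.log_one, inv_one] at h1
  linarith

private lemma key_ineq (a b : ℝ) (ha : 0 < a) (hb : 0 < b) :
    a - b + (a - b)^2 / (2 * max a b) ≤ a * Real.log (a / b) := by
  rcases le_total b a with h | h
  · rw [max_eq_left h]
    have ht : 1 ≤ a / b := (one_le_div hb).mpr h
    have h1 := aux1 ht
    have he : 3/2 - 2 * (a/b)⁻¹ + (1/2) * ((a/b)^2)⁻¹
        = 3/2 - 2*b/a + b^2/(2*a^2) := by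
      field_simp
    rw [he] at h1
    have heq : a - b + (a-b)^2/(2*a) = a*(3/2 - 2*b/a + b^2/(2*a^2)) := by
      field_simp; ring
    rw [heq]
    exact mul_le_mul_of_nonneg_left h1 ha.le
  · rw [max_eq_right h]
    have hu : 1 ≤ b / a := (one_le_div ha).mpr h
    have h1 := aux2 hu
    have hlog : Real.log (a/b) = - Real.log (b/a) := by
      rw [Real.log_div ha.ne' hb.ne', Real.log_div hb.ne' ha.ne']; ring
    have he : (b/a)/2 - (1/2) * (b/a)⁻¹ = b/(2*a) - a/(2*b) := by
      field_simp
    rw [he] at h1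
    have h2 : a/(2*b) - b/(2*a) ≤ Real.log (a/b) := by rw [hlog]; linarith
    have heq : a - b + (a-b)^2/(2*b) = a*(a/(2*b) - b/(2*a)) := by
      field_simp; ring
    rw [heq]
    exact mul_le_mul_of_nonneg_left h2 ha.le

/-- For `p ∈ (0,1)` and `|x| ≤ 2p(1-p)` with `p + x ∈ (0,1)`,
`D(p+x ‖ p) ≥ x² / (6 p (1-p))`. -/
theorem klBer_quadratic_lower (p x : ℝ) (hp0 : 0 < p) (hp1 : p < 1)
    (hx : |x| ≤ 2 * p * (1 - p)) (hpx0 : 0 < p + x) (hpx1 : p + x < 1) :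
    klBer (p + x) p ≥ x ^ 2 / (6 * p * (1 - p)) := by
  have hq0 : 0 < 1 - p := by linarith
  have hqx0 : 0 < 1 - (p + x) := by linarith
  have hax := abs_le.mp hx
  have k1 := key_ineq (p + x) p hpx0 hp0
  have k2 := key_ineq (1 - (p + x)) (1 - p) hqx0 hq0
  have m1 : max (p + x) p ≤ 3 * p := by
    apply max_le <;> nlinarith
  have m2 : max (1 - (p + x)) (1 - p) ≤ 3 * (1 - p) := by
    apply max_le <;> nlinarith
  have m1pos : 0 < max (p + x) p := lt_max_of_lt_right hp0
  have m2pos : 0 < max (1 - (p + x)) (1 - p) := lt_max_of_lt_right hq0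
  have b1 : x^2 / (6 * p) ≤ ((p + x) - p)^2 / (2 * max (p + x) p) := by
    have : ((p + x) - p)^2 = x^2 := by ring
    rw [this]
    apply div_le_div_of_nonneg_left (by positivity) (by positivity)
    linarith
  have b2 : x^2 / (6 * (1 - p)) ≤ ((1 - (p + x)) - (1 - p))^2 / (2 * max (1 - (p + x)) (1 - p)) := by
    have : ((1 - (p + x)) - (1 - p))^2 = x^2 := by ring
    rw [this]
    apply div_le_div_of_nonneg_left (by positivity) (by positivity)
    linarith
  have hsum : x^2 / (6 * p) + x^2 / (6 * (1 - p)) = x ^ 2 / (6 * p * (1 - p)) := by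
    field_simp
    ring
  unfold klBer
  have hlin : ((p + x) - p) + ((1 - (p + x)) - (1 - p)) = 0 := by ring
  nlinarith [k1, k2, b1, b2]
end
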